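/- arXiv:1307.7880 — 2 statements merged into one kernel-verified Lean document; each statement's English description precedes it below -/
import Mathlib

section
/- Let M₁, M₂, M₃ ∈ SL_2(ℂ). Set a₁ = Tr(M₁), a₂ = Tr(M₂), a₃ = Tr(M₃), a₄ = Tr(M₃M₂M₁), and x₁ = Tr(M₃M₂), x₂ = Tr(M₁M₃), x₃ = Tr(M₂M₁). Then x₁x₂x₃ + x₁² + x₂² + x₃² − θ₁x₁ − θ₂x₂ − θ₃x₃ + θ₄ = 0, where θᵢ = aᵢa₄ + aⱼa_k for (i,j,k) a cyclic permutation of (1,2,3), and θ₄ = a₁a₂a₃a₄ + a₁² + a₂² + a₃² + a₄² − 4. -/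
/-!
For `2 × 2` matrices the sum and the product of `tr (ABC)` and `tr (CBA)` are polynomials in
`tr A`, `tr B`, `tr C`, `tr (AB)`, `tr (BC)`, `tr (CA)` and the determinants (the sum by polarized
Cayley–Hamilton). So `tr (ABC)` is a root of `z² - (tr ABC + tr CBA) z + tr ABC · tr CBA`, and on
`SL₂` this quadratic equation, written out, is the Fricke–Klein cubic.
-/

open Matrix

namespace Matrix

variable {R : Type*} [CommRing R] (A B C : Matrix (Fin 2) (Fin 2) R)

theorem trace_mul_mul_add_trace_mul_mul_reverse_fin_two :
    trace (A * B * C) + trace (C * B * A) =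
      trace A * trace (B * C) + trace B * trace (C * A) + trace C * trace (A * B)
        - trace A * trace B * trace C := by
  simp only [trace_fin_two, mul_apply, Fin.sum_univ_two]
  ring

theorem trace_mul_mul_mul_trace_mul_mul_reverse_fin_two :
    trace (A * B * C) * trace (C * B * A) =
      trace (A * B) * trace (B * C) * trace (C * A)
        + A.det * trace (B * C) ^ 2 + B.det * trace (C * A) ^ 2 + C.det * trace (A * B) ^ 2
        + B.det * C.det * trace A ^ 2 + C.det * A.det * trace B ^ 2 + A.det * B.det * trace C ^ 2
        - A.det * trace B * trace C * trace (B * C) - B.det * trace C * trace A * trace (C * A)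
        - C.det * trace A * trace B * trace (A * B) - 4 * A.det * B.det * C.det := by
  simp only [trace_fin_two, det_fin_two, mul_apply, Fin.sum_univ_two]
  ring

end Matrix

theorem fricke_klein_cubic_relation (M₁ M₂ M₃ : Matrix (Fin 2) (Fin 2) ℂ)
    (h₁ : M₁.det = 1) (h₂ : M₂.det = 1) (h₃ : M₃.det = 1)
    (a₁ a₂ a₃ a₄ x₁ x₂ x₃ θ₁ θ₂ θ₃ θ₄ : ℂ)
    (ha₁ : a₁ = Matrix.trace M₁) (ha₂ : a₂ = Matrix.trace M₂)
    (ha₃ : a₃ = Matrix.trace M₃) (ha₄ : a₄ = Matrix.trace (M₃ * M₂ * M₁))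
    (hx₁ : x₁ = Matrix.trace (M₃ * M₂)) (hx₂ : x₂ = Matrix.trace (M₁ * M₃))
    (hx₃ : x₃ = Matrix.trace (M₂ * M₁))
    (hθ₁ : θ₁ = a₁ * a₄ + a₂ * a₃)
    (hθ₂ : θ₂ = a₂ * a₄ + a₃ * a₁)
    (hθ₃ : θ₃ = a₃ * a₄ + a₁ * a₂)
    (hθ₄ : θ₄ = a₁ * a₂ * a₃ * a₄ + a₁ ^ 2 + a₂ ^ 2 + a₃ ^ 2 + a₄ ^ 2 - 4) :
    x₁ * x₂ * x₃ + x₁ ^ 2 + x₂ ^ 2 + x₃ ^ 2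
      - θ₁ * x₁ - θ₂ * x₂ - θ₃ * x₃ + θ₄ = 0 := by
  have hsum := trace_mul_mul_add_trace_mul_mul_reverse_fin_two M₃ M₂ M₁
  have hprod := trace_mul_mul_mul_trace_mul_mul_reverse_fin_two M₃ M₂ M₁
  rw [h₁, h₂, h₃] at hprod
  subst ha₁ ha₂ ha₃ ha₄ hx₁ hx₂ hx₃ hθ₁ hθ₂ hθ₃ hθ₄
  linear_combination trace (M₃ * M₂ * M₁) * hsum - hprod
end

section
/- Fix k ∈ ℂ and α⁺, α⁻ ∈ ℂ with α⁺ + α⁻ = k, α⁺α⁻ = 1 and α⁺ ≠ α⁻. The map sending ([S:T],[U:V]) ∈ ℙ¹ × ℙ¹ to [a:b:c:d:e] ∈ ℙ⁴ with a = (α⁻SU + α⁺TV)/(α⁺−α⁻), b = SV, c = TU, d = (α⁺SU + α⁻TV)/(α⁺−α⁻), e = (SU + TV)/(α⁺−α⁻) is a well-defined bijection from ℙ¹ × ℙ¹ onto the subvariety of ℙ⁴ defined by the equations a + d = ke and ad − bc = e². -/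
/-!
The map factors through the Segre map `([s], [u]) ↦ [s uᵀ]` from `ℙ¹ × ℙ¹` to the projective
space of `2 × 2` matrices, which is a bijection onto the quadric `det M = 0` (a nonzero `2 × 2`
matrix is singular iff it has rank one). It is followed by an injective linear map
`M ↦ [a:b:c:d:e]` onto the hyperplane `a + d = k e`, inverted by
`[a:b:c:d:e] ↦ !![α⁺e - a, b; c, a - α⁻e]`, and since `(α⁺ - α⁻)² = k² - 4` it carries
`det M` to `ad - bc - e²` on that hyperplane.
-/

open Matrix Projectivization
open scoped LinearAlgebra.Projectivization

namespace Projectivization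

variable {K n : Type*} [Field K]

noncomputable def segre (x y : ℙ K (n → K)) : ℙ K (Matrix n n K) :=
  mk K (vecMulVec x.rep y.rep) (vecMulVec_ne_zero x.rep_nonzero y.rep_nonzero)

theorem segre_mk {s u : n → K} (hs : s ≠ 0) (hu : u ≠ 0) :
    segre (mk K s hs) (mk K u hu) = mk K (vecMulVec s u) (vecMulVec_ne_zero hs hu) := by
  obtain ⟨a, ha⟩ := exists_smul_eq_mk_rep K s hs
  obtain ⟨b, hb⟩ := exists_smul_eq_mk_rep K u hu
  rw [segre, mk_eq_mk_iff]
  exact ⟨a * b, by rw [← ha, ← hb, smul_vecMulVec, vecMulVec_smul, mul_smul, smul_comm]⟩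

theorem mk_eq_mk_of_vecMulVec_eq_smul {s u s' u' : n → K} (hs : s ≠ 0) (hu : u ≠ 0)
    (hs' : s' ≠ 0) (hu' : u' ≠ 0) {t : K} (h : t • vecMulVec s' u' = vecMulVec s u) :
    mk K s hs = mk K s' hs' ∧ mk K u hu = mk K u' hu' := by
  have entry (i j) : s i * u j = t * (s' i * u' j) := by
    simpa [vecMulVec_apply] using congr($h.symm i j)
  obtain ⟨i, hi⟩ : ∃ i, s i ≠ 0 := Function.ne_iff.mp hs
  obtain ⟨j, hj⟩ : ∃ j, u j ≠ 0 := Function.ne_iff.mp hu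
  refine ⟨(mk_eq_mk_iff' K _ _ _ _).2 ⟨t * u' j / u j, funext fun i' => ?_⟩,
    (mk_eq_mk_iff' K _ _ _ _).2 ⟨t * s' i / s i, funext fun j' => ?_⟩⟩
  · simp only [Pi.smul_apply, smul_eq_mul]
    field_simp
    linear_combination (entry i' j).symm
  · simp only [Pi.smul_apply, smul_eq_mul]
    field_simp
    linear_combination (entry i j').symm

theorem segre_injective :
    Function.Injective fun p : ℙ K (n → K) × ℙ K (n → K) => segre p.1 p.2 := by
  rintro ⟨x, y⟩ ⟨x', y'⟩ h
  induction x using ind with | h s hs =>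
  induction y using ind with | h u hu =>
  induction x' using ind with | h s' hs' =>
  induction y' using ind with | h u' hu' =>
  simp only [segre_mk, mk_eq_mk_iff'] at h
  obtain ⟨t, ht⟩ := h
  obtain ⟨h1, h2⟩ := mk_eq_mk_of_vecMulVec_eq_smul hs hu hs' hu' ht
  rw [h1, h2]

end Projectivization

theorem Matrix.exists_vecMulVec_eq_of_det_eq_zero {K : Type*} [Field K]
    {M : Matrix (Fin 2) (Fin 2) K} (hM : M.det = 0) : ∃ s u : Fin 2 → K, vecMulVec s u = M := by
  rw [det_fin_two] at hM
  by_cases h₀₀ : M 0 0 = 0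
  · by_cases h₀₁ : M 0 1 = 0
    · refine ⟨![0, 1], M 1, ?_⟩
      ext i j; fin_cases i <;> fin_cases j <;> simp [vecMulVec_apply, h₀₀, h₀₁]
    · refine ⟨![1, M 1 1 / M 0 1], M 0, ?_⟩
      ext i j; fin_cases i <;> fin_cases j <;> simp [vecMulVec_apply]
      · field_simp
        linear_combination hM
      · field_simp
  · refine ⟨![1, M 1 0 / M 0 0], M 0, ?_⟩
    ext i j; fin_cases i <;> fin_cases j <;> simp [vecMulVec_apply]
    · field_simp
    · field_simp
      linear_combination -hM

section ConjClass

variable {K : Type*} [Field K] (αp αm : K)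

-- The matrix `M` is `!![SU, SV; TU, TV]`.
def conjClassCoords : Matrix (Fin 2) (Fin 2) K →ₗ[K] Fin 5 → K where
  toFun M := ![(αm * M 0 0 + αp * M 1 1) / (αp - αm), M 0 1, M 1 0,
    (αp * M 0 0 + αm * M 1 1) / (αp - αm), (M 0 0 + M 1 1) / (αp - αm)]
  map_add' M N := by ext i; fin_cases i <;> simp <;> ring
  map_smul' c M := by ext i; fin_cases i <;> simp <;> ring

def ofConjClassCoords (v : Fin 5 → K) : Matrix (Fin 2) (Fin 2) K :=
  !![αp * v 4 - v 0, v 1; v 2, v 0 - αm * v 4]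

def conjClassClosure (k : K) : Set (ℙ K (Fin 5 → K)) :=
  {x | ∃ (v : Fin 5 → K) (hv : v ≠ 0), x = mk K v hv ∧
    v 0 + v 3 = k * v 4 ∧ v 0 * v 3 - v 1 * v 2 = (v 4) ^ 2}

variable {αp αm}

theorem ofConjClassCoords_conjClassCoords (hne : αp ≠ αm) (M : Matrix (Fin 2) (Fin 2) K) :
    ofConjClassCoords αp αm (conjClassCoords αp αm M) = M := by
  have hD : αp - αm ≠ 0 := sub_ne_zero.mpr hne
  ext i j; fin_cases i <;> fin_cases j <;> simp [ofConjClassCoords, conjClassCoords] <;>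
    field_simp <;> ring

theorem conjClassCoords_injective (hne : αp ≠ αm) :
    Function.Injective (conjClassCoords αp αm) :=
  Function.LeftInverse.injective (g := ofConjClassCoords αp αm)
    (ofConjClassCoords_conjClassCoords hne)

theorem conjClassCoords_ofConjClassCoords (hne : αp ≠ αm) {v : Fin 5 → K}
    (hv : v 0 + v 3 = (αp + αm) * v 4) :
    conjClassCoords αp αm (ofConjClassCoords αp αm v) = v := by
  have hD : αp - αm ≠ 0 := sub_ne_zero.mpr hne
  ext i; fin_cases i <;> simp [ofConjClassCoords, conjClassCoords] <;> field_simp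
  · ring
  · linear_combination -(αp - αm) * hv

theorem conjClassCoords_trace (M : Matrix (Fin 2) (Fin 2) K) :
    conjClassCoords αp αm M 0 + conjClassCoords αp αm M 3 =
      (αp + αm) * conjClassCoords αp αm M 4 := by
  simp only [conjClassCoords, LinearMap.coe_mk, AddHom.coe_mk, Fin.isValue, cons_val_zero, cons_val]
  ring

theorem conjClassCoords_det (hne : αp ≠ αm) (hprod : αp * αm = 1)
    (M : Matrix (Fin 2) (Fin 2) K) :
    conjClassCoords αp αm M 0 * conjClassCoords αp αm M 3 -
      conjClassCoords αp αm M 1 * conjClassCoords αp αm M 2 =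
      conjClassCoords αp αm M 4 ^ 2 + M.det := by
  have hD : αp - αm ≠ 0 := sub_ne_zero.mpr hne
  simp only [conjClassCoords, LinearMap.coe_mk, AddHom.coe_mk, Fin.isValue, cons_val_zero, cons_val,
    cons_val_one, det_fin_two]
  field_simp
  linear_combination (M 0 0 + M 1 1) ^ 2 * hprod

theorem det_ofConjClassCoords (hprod : αp * αm = 1) {v : Fin 5 → K}
    (hv : v 0 + v 3 = (αp + αm) * v 4) :
    (ofConjClassCoords αp αm v).det = v 0 * v 3 - v 1 * v 2 - v 4 ^ 2 := by
  simp only [ofConjClassCoords, det_fin_two, Fin.isValue, of_apply, cons_val', cons_val_zero,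
    cons_val_fin_one, cons_val_one]
  linear_combination -v 0 * hv - v 4 ^ 2 * hprod

theorem conjClassCoords_vecMulVec (S T U V : K) :
    conjClassCoords αp αm (vecMulVec ![S, T] ![U, V]) =
      ![(αm * S * U + αp * T * V) / (αp - αm), S * V, T * U,
        (αp * S * U + αm * T * V) / (αp - αm), (S * U + T * V) / (αp - αm)] := by
  ext i; fin_cases i <;> simp [conjClassCoords] <;> ring

noncomputable def conjClassParam (hne : αp ≠ αm) (p : ℙ K (Fin 2 → K) × ℙ K (Fin 2 → K)) :
    ℙ K (Fin 5 → K) :=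
  (segre p.1 p.2).map (conjClassCoords αp αm) (conjClassCoords_injective hne)

theorem conjClassParam_mk (hne : αp ≠ αm) {s u : Fin 2 → K} (hs : s ≠ 0) (hu : u ≠ 0) :
    conjClassParam hne (mk K s hs, mk K u hu) =
      mk K (conjClassCoords αp αm (vecMulVec s u))
        ((map_ne_zero_iff _ (conjClassCoords_injective hne)).2 (vecMulVec_ne_zero hs hu)) := by
  rw [conjClassParam, segre_mk, map_mk]

theorem conjClassParam_injective (hne : αp ≠ αm) : Function.Injective (conjClassParam hne) :=
  (Projectivization.map_injective _ _).comp segre_injective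

theorem conjClassParam_mem (hne : αp ≠ αm) (hprod : αp * αm = 1)
    (p : ℙ K (Fin 2 → K) × ℙ K (Fin 2 → K)) :
    conjClassParam hne p ∈ conjClassClosure (αp + αm) := by
  obtain ⟨x, y⟩ := p
  induction x using ind with | h s hs =>
  induction y using ind with | h u hu =>
  rw [conjClassParam_mk]
  refine ⟨_, _, rfl, conjClassCoords_trace _, ?_⟩
  rw [conjClassCoords_det hne hprod, det_vecMulVec, add_zero]

theorem exists_conjClassParam_eq (hne : αp ≠ αm) (hprod : αp * αm = 1)
    {x : ℙ K (Fin 5 → K)} (hx : x ∈ conjClassClosure (αp + αm)) :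
    ∃ p, conjClassParam hne p = x := by
  obtain ⟨v, hv, rfl, htrace, hdet⟩ := hx
  obtain ⟨s, u, hsu⟩ := exists_vecMulVec_eq_of_det_eq_zero (M := ofConjClassCoords αp αm v)
    (by rw [det_ofConjClassCoords hprod htrace, hdet, sub_self])
  have hv' : conjClassCoords αp αm (vecMulVec s u) = v := by
    rw [hsu, conjClassCoords_ofConjClassCoords hne htrace]
  have hsu₀ : vecMulVec s u ≠ 0 := by
    intro h
    rw [h, map_zero] at hv'
    exact hv hv'.symm
  obtain ⟨hs, hu⟩ := not_or.1 (mt vecMulVec_eq_zero.2 hsu₀)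
  subst hv'
  exact ⟨(mk K s hs, mk K u hu), conjClassParam_mk hne hs hu⟩

end ConjClass

theorem p1p1_parametrization (k αp αm : ℂ)
    (hsum : αp + αm = k) (hprod : αp * αm = 1) (hne : αp ≠ αm) :
    ∃ f : Projectivization ℂ (Fin 2 → ℂ) × Projectivization ℂ (Fin 2 → ℂ) →
        {x : Projectivization ℂ (Fin 5 → ℂ) //
          ∃ (v : Fin 5 → ℂ) (hv : v ≠ 0), x = Projectivization.mk ℂ v hv ∧
            v 0 + v 3 = k * v 4 ∧ v 0 * v 3 - v 1 * v 2 = (v 4) ^ 2},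
      Function.Bijective f ∧
      ∀ (S T U V : ℂ) (hST : ![S, T] ≠ 0) (hUV : ![U, V] ≠ 0),
        ∃ hvec : ![(αm * S * U + αp * T * V) / (αp - αm), S * V, T * U,
            (αp * S * U + αm * T * V) / (αp - αm),
            (S * U + T * V) / (αp - αm)] ≠ 0,
          (f (Projectivization.mk ℂ ![S, T] hST,
              Projectivization.mk ℂ ![U, V] hUV)).1 =
            Projectivization.mk ℂ
              ![(αm * S * U + αp * T * V) / (αp - αm), S * V, T * U,
                (αp * S * U + αm * T * V) / (αp - αm),
                (S * U + T * V) / (αp - αm)] hvec := by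
  subst hsum
  refine ⟨Set.codRestrict (conjClassParam hne) _ (conjClassParam_mem hne hprod),
    ⟨(Set.injective_codRestrict _).2 (conjClassParam_injective hne), ?_⟩, ?_⟩
  · rintro ⟨x, hx⟩
    obtain ⟨p, rfl⟩ := exists_conjClassParam_eq hne hprod hx
    exact ⟨p, rfl⟩
  · intro S T U V hST hUV
    have h := conjClassParam_mk hne hST hUV
    simp only [conjClassCoords_vecMulVec] at h
    exact ⟨_, h⟩
end
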